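/- Let R be a ring. A left R-module M is flat if and only if its character module M^+ = Hom_ℤ(M, ℚ/ℤ) is an injective right R-module. -/

import Mathlib

universe u

/-! Common definitions: character modules, purity, pure injectivity. -/

open MulOpposite

/-- The character group `M⁺ = Hom_ℤ(M, ℚ/ℤ)`. -/
def CharMod (M : Type u) [AddCommGroup M] : Type u := M →+ AddCircle (1 : ℚ)

instance (M : Type u) [AddCommGroup M] : AddCommGroup (CharMod M) :=
  inferInstanceAs (AddCommGroup (M →+ AddCircle (1 : ℚ)))

instance (M : Type u) [AddCommGroup M] : FunLike (CharMod M) M (AddCircle (1 : ℚ)) :=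
  inferInstanceAs (FunLike (M →+ AddCircle (1 : ℚ)) M (AddCircle (1 : ℚ)))

instance (M : Type u) [AddCommGroup M] :
    AddMonoidHomClass (CharMod M) M (AddCircle (1 : ℚ)) :=
  inferInstanceAs (AddMonoidHomClass (M →+ AddCircle (1 : ℚ)) M (AddCircle (1 : ℚ)))

/-- If `M` is a left `R`-module, `M⁺` is a right `R`-module via `(c • r) m = c (r • m)`. -/
instance CharMod.moduleOp (R : Type v) [Ring R] (M : Type u) [AddCommGroup M] [Module R M] :
    Module Rᵐᵒᵖ (CharMod M) where
  smul r c := (c : M →+ AddCircle (1 : ℚ)).comp (DistribMulAction.toAddMonoidHom M r.unop)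
  one_smul c := AddMonoidHom.ext fun m => congrArg c (one_smul R m)
  mul_smul r s c := AddMonoidHom.ext fun m => congrArg c (mul_smul s.unop r.unop m)
  smul_zero r := rfl
  smul_add r c d := rfl
  add_smul r s c := AddMonoidHom.ext fun m => by
    show c ((r.unop + s.unop) • m) = c (r.unop • m) + c (s.unop • m)
    rw [add_smul, map_add]
  zero_smul c := AddMonoidHom.ext fun m => by
    show c ((0 : R) • m) = 0
    rw [zero_smul, map_zero]

@[simp] lemma CharMod.op_smul_apply {R : Type v} [Ring R] {M : Type u} [AddCommGroup M]
    [Module R M] (r : Rᵐᵒᵖ) (c : CharMod M) (m : M) : (r • c) m = c (r.unop • m) := rfl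

/-- If `N` is a right `R`-module, `N⁺` is a left `R`-module via `(r • c) n = c (n • r)`. -/
instance CharMod.moduleUnop (R : Type v) [Ring R] (N : Type u) [AddCommGroup N] [Module Rᵐᵒᵖ N] :
    Module R (CharMod N) where
  smul r c := (c : N →+ AddCircle (1 : ℚ)).comp (DistribMulAction.toAddMonoidHom N (op r))
  one_smul c := AddMonoidHom.ext fun n => congrArg c (one_smul Rᵐᵒᵖ n)
  mul_smul r s c := AddMonoidHom.ext fun n => by
    show c ((op (r * s)) • n) = c (op s • op r • n)
    rw [← mul_smul]; rfl
  smul_zero r := rfl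
  smul_add r c d := rfl
  add_smul r s c := AddMonoidHom.ext fun n => by
    show c ((op (r + s)) • n) = c (op r • n) + c (op s • n)
    rw [show op (r + s) = op r + op s from rfl, add_smul, map_add]
  zero_smul c := AddMonoidHom.ext fun n => by
    show c ((op (0 : R)) • n) = 0
    rw [show op (0 : R) = (0 : Rᵐᵒᵖ) from rfl, zero_smul, map_zero]

@[simp] lemma CharMod.unop_smul_apply {R : Type v} [Ring R] {N : Type u} [AddCommGroup N]
    [Module Rᵐᵒᵖ N] (r : R) (c : CharMod N) (n : N) : (r • c) n = c (op r • n) := rfl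

/-- The dual `f⁺ : C⁺ → A⁺` of a map `f : A → C` of left `R`-modules. -/
def charDual {R : Type v} [Ring R] {A C : Type u} [AddCommGroup A] [Module R A]
    [AddCommGroup C] [Module R C] (f : A →ₗ[R] C) : CharMod C →ₗ[Rᵐᵒᵖ] CharMod A where
  toFun c := (c : C →+ AddCircle (1 : ℚ)).comp f.toAddMonoidHom
  map_add' _ _ := rfl
  map_smul' r c := AddMonoidHom.ext fun a => (congrArg c (f.map_smul r.unop a)).symm

/-- The canonical evaluation map `σ_M : M → M⁺⁺`. -/
def charEval (R : Type v) [Ring R] (M : Type u) [AddCommGroup M] [Module R M] :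
    M →ₗ[R] CharMod (CharMod M) where
  toFun m :=
    { toFun := fun c => c m
      map_zero' := rfl
      map_add' := fun _ _ => rfl }
  map_add' m m' := AddMonoidHom.ext fun c => c.map_add m m'
  map_smul' r m := AddMonoidHom.ext fun c => rfl

/-- A linear map `i : M → N` is a pure monomorphism if it is injective and every
map from a finitely presented module to `N ⧸ im i` lifts to `N`, i.e. the short exact
sequence `0 → M → N → N ⧸ im i → 0` remains exact after applying `Hom(F, -)` for all
finitely presented `F`. -/
def IsPureMono {R : Type v} [Ring R] {M N : Type u} [AddCommGroup M] [Module R M]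
    [AddCommGroup N] [Module R N] (i : M →ₗ[R] N) : Prop :=
  Function.Injective i ∧
    ∀ (F : Type u) [AddCommGroup F] [Module R F], Module.FinitePresentation R F →
      ∀ g : F →ₗ[R] (N ⧸ LinearMap.range i),
        ∃ h : F →ₗ[R] N, (LinearMap.range i).mkQ.comp h = g

/-- A module `E` is pure injective if every map to `E` extends along pure monomorphisms. -/
def IsPureInjective (R : Type v) [Ring R] (E : Type u) [AddCommGroup E] [Module R E] : Prop :=
  ∀ (M N : Type u) [AddCommGroup M] [Module R M] [AddCommGroup N] [Module R N]
    (i : M →ₗ[R] N), IsPureMono i →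
      ∀ f : M →ₗ[R] E, ∃ g : N →ₗ[R] E, g.comp i = f

/-- A module `M` over an arbitrary ring `R` is flat iff every homomorphism from a finitely
presented module to `M` factors through a finitely generated free module (Lazard-Govorov);
we use this tensor-free characterization as the definition of flatness. -/
def IsFlat (R : Type v) [Ring R] (M : Type u) [AddCommGroup M] [Module R M] : Prop :=
  ∀ (F : Type u) [AddCommGroup F] [Module R F], Module.FinitePresentation R F →
    ∀ g : F →ₗ[R] M, ∃ (n : ℕ) (p : F →ₗ[R] (Fin n → R)) (q : (Fin n → R) →ₗ[R] M),
      q.comp p = g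

/-! Both directions go through the equational criterion: `M` is flat iff every solution `x` of a
finite linear system `k x = 0` vanishes trivially, i.e. `x = A y` with `k A = 0`.

If `M` is flat, a map `g` from a right ideal `I` to `M⁺` defines a character `∑ rₐ mₐ ↦ ∑ g(rₐ)(mₐ)`
of `I M`: it is well defined because a relation `∑ rₐ mₐ = 0` is trivial and `g` is `R`-linear.
Extending it to `M` (`ℚ/ℤ` is divisible) solves Baer's problem for `g`.

Conversely, if `M⁺` is injective and `x` did not vanish trivially, some character `χ` of `Mⁱ` would
kill the trivial solutions but not `x`. Write `χ x = ∑ cᵢ (xᵢ)` with `c ∈ (M⁺)ⁱ`; the map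
`a ↦ ∑ aᵢ cᵢ` vanishes on the columns `a` with `k a = 0`, so injectivity of `M⁺` extends it along
`a ↦ k a`, i.e. `c = kᵀ ψ`, whence `χ x = ψ (k x) = 0`. -/

section General

variable {S : Type*} [Ring S]

theorem LinearMap.eq_fintypeLinearCombination {ι N : Type*} [Fintype ι] [DecidableEq ι]
    [AddCommGroup N] [Module S N] (f : (ι → S) →ₗ[S] N) :
    f = Fintype.linearCombination S fun i => f (Pi.single i 1) := by
  ext i
  simp

theorem Module.Baer.exists_comp_eq_of_ker_le {Q P P' : Type*} [AddCommGroup Q] [Module S Q]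
    [AddCommGroup P] [Module S P] [AddCommGroup P'] [Module S P'] (hQ : Module.Baer S Q)
    (v : P →ₗ[S] P') (φ : P →ₗ[S] Q) (h : LinearMap.ker v ≤ LinearMap.ker φ) :
    ∃ ψ : P' →ₗ[S] Q, ψ ∘ₗ v = φ := by
  obtain ⟨ψ, hψ⟩ := hQ.extension_property ((LinearMap.ker v).liftQ v le_rfl)
    (LinearMap.ker_eq_bot.mp (Submodule.ker_liftQ_eq_bot _ _ _ le_rfl))
    ((LinearMap.ker v).liftQ φ h)
  exact ⟨ψ, LinearMap.ext fun p => LinearMap.congr_fun hψ (Submodule.Quotient.mk p)⟩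

theorem AddSubgroup.exists_character_eq_zero_ne_zero {G : Type*} [AddCommGroup G]
    {T : AddSubgroup G} {x : G} (hx : x ∉ T) :
    ∃ χ : G →+ AddCircle (1 : ℚ), (∀ z ∈ T, χ z = 0) ∧ χ x ≠ 0 := by
  obtain ⟨c, hc⟩ := CharacterModule.exists_character_apply_ne_zero_of_ne_zero
    (mt (QuotientAddGroup.eq_zero_iff x).mp hx)
  refine ⟨(c : G ⧸ T →+ AddCircle (1 : ℚ)).comp (QuotientAddGroup.mk' T), fun z hz => ?_, hc⟩
  change c (z : G ⧸ T) = 0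
  rw [(QuotientAddGroup.eq_zero_iff z).mpr hz, map_zero]

end General

@[simp] lemma CharMod.zero_apply {M : Type*} [AddCommGroup M] (m : M) : (0 : CharMod M) m = 0 :=
  rfl

@[simp] lemma CharMod.sum_apply {M ι : Type*} [AddCommGroup M] (s : Finset ι)
    (c : ι → CharMod M) (m : M) : (∑ i ∈ s, c i) m = ∑ i ∈ s, c i m :=
  AddMonoidHom.finsetSum_apply _ _ _

section EquationalCriterion

variable {R : Type u} [Ring R] {M : Type u} [AddCommGroup M] [Module R M]
  {ι κ : Type*} [Fintype ι] [Fintype κ]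

variable (M) in
def trivialSolutions (k : κ → ι → R) : AddSubgroup (ι → M) where
  carrier := {x | ∃ (n : ℕ) (A : ι → Fin n → R) (y : Fin n → M),
    (∀ j j', ∑ i, k j i * A i j' = 0) ∧ ∀ i, x i = ∑ j', A i j' • y j'}
  zero_mem' := ⟨0, fun _ => Fin.elim0, Fin.elim0, fun _ j' => j'.elim0, fun _ => by simp⟩
  add_mem' := by
    rintro x₁ x₂ ⟨n₁, A₁, y₁, hA₁, hx₁⟩ ⟨n₂, A₂, y₂, hA₂, hx₂⟩
    refine ⟨n₁ + n₂, fun i => Fin.append (A₁ i) (A₂ i), Fin.append y₁ y₂, fun j j' => ?_,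
      fun i => ?_⟩
    · refine Fin.addCases (fun j' => ?_) (fun j' => ?_) j' <;> simp [hA₁, hA₂]
    · simp [hx₁ i, hx₂ i, Fin.sum_univ_add]
  neg_mem' := by
    rintro x ⟨n, A, y, hA, hx⟩
    exact ⟨n, A, -y, hA, fun i => by simp [hx i]⟩

theorem IsFlat.mem_trivialSolutions {ι : Type u} [Fintype ι] (hM : IsFlat R M)
    (k : κ → ι → R) (x : ι → M) (hx : ∀ j, ∑ i, k j i • x i = 0) :
    x ∈ trivialSolutions M k := by
  classical
  set K := Submodule.span R (Set.range k)
  have hF : Module.FinitePresentation R ((ι → R) ⧸ K) :=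
    Module.finitePresentation_of_free_of_surjective K.mkQ K.mkQ_surjective
      (by rw [Submodule.ker_mkQ]; exact Submodule.fg_span (Set.finite_range k))
  have hK : K ≤ LinearMap.ker (Fintype.linearCombination R x) := by
    rw [Submodule.span_le]
    rintro _ ⟨j, rfl⟩
    exact hx j
  obtain ⟨n, p, q, hpq⟩ := hM _ hF (K.liftQ _ hK)
  set A : ι → Fin n → R := fun i => p (K.mkQ (Pi.single i 1))
  have hpA : p ∘ₗ K.mkQ = Fintype.linearCombination R A :=
    (p ∘ₗ K.mkQ).eq_fintypeLinearCombination
  refine ⟨n, A, fun j' => q (Pi.single j' 1), fun j j' => ?_, fun i => ?_⟩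
  · have hkj : (p ∘ₗ K.mkQ) (k j) = 0 := by
      rw [LinearMap.comp_apply, Submodule.mkQ_apply,
        (Submodule.Quotient.mk_eq_zero K).mpr (Submodule.subset_span ⟨j, rfl⟩), map_zero]
    rw [hpA, Fintype.linearCombination_apply] at hkj
    simpa using congrFun hkj j'
  · have hxi : x i = q (A i) := by
      change x i = (q ∘ₗ p) (K.mkQ (Pi.single i 1))
      simp [hpq]
    rw [hxi]
    exact LinearMap.congr_fun q.eq_fintypeLinearCombination (A i)

theorem isFlat_of_forall_mem_trivialSolutions
    (h : ∀ (l m : ℕ) (k : Fin l → Fin m → R) (x : Fin m → M),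
      (∀ j, ∑ i, k j i • x i = 0) → x ∈ trivialSolutions M k) :
    IsFlat R M := by
  intro F _ _ hF g
  obtain ⟨m, l, π, ρ, hπ, hexact⟩ := Module.FinitePresentation.exists_fin' R F
  set k : Fin l → Fin m → R := fun j => ρ (Pi.single j 1)
  have hρ : ρ = Fintype.linearCombination R k := ρ.eq_fintypeLinearCombination
  obtain ⟨n, A, y, hA, hx⟩ := h l m k (fun i => g (π (Pi.single i 1))) fun j => by
    have hgπ := LinearMap.congr_fun (g ∘ₗ π).eq_fintypeLinearCombination (k j)
    rw [LinearMap.comp_apply, show π (k j) = 0 from hexact.apply_apply_eq_zero _,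
      map_zero] at hgπ
    exact hgπ.symm
  set α := Fintype.linearCombination R A
  have hα : LinearMap.range ρ ≤ LinearMap.ker α := by
    rw [LinearMap.range_le_ker_iff, hρ]
    ext j j'
    simpa [α, Fintype.linearCombination_apply] using hA j j'
  set p := (LinearMap.range ρ).liftQ α hα ∘ₗ (hexact.linearEquivOfSurjective hπ).symm.toLinearMap
  have hpπ : p ∘ₗ π = α := by ext v; simp [p]
  refine ⟨n, p, Fintype.linearCombination R y, (LinearMap.cancel_right hπ).mp ?_⟩
  rw [LinearMap.comp_assoc, hpπ]
  ext i
  simp [α, hx i, Fintype.linearCombination_apply]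

theorem mem_trivialSolutions_of_injective
    (hI : Module.Injective Rᵐᵒᵖ (CharMod M)) (k : κ → ι → R) (x : ι → M)
    (hx : ∀ j, ∑ i, k j i • x i = 0) : x ∈ trivialSolutions M k := by
  classical
  by_contra hxT
  obtain ⟨χ, hχT, hχx⟩ := AddSubgroup.exists_character_eq_zero_ne_zero hxT
  set c : ι → CharMod M := fun i =>
    (χ.comp (AddMonoidHom.single (fun _ : ι => M) i) : M →+ AddCircle (1 : ℚ))
  have hχ : ∀ z : ι → M, χ z = ∑ i, c i (z i) := fun z => by
    conv_lhs => rw [← Finset.univ_sum_single z, map_sum]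
    rfl
  set v : (ι → Rᵐᵒᵖ) →ₗ[Rᵐᵒᵖ] (κ → Rᵐᵒᵖ) :=
    Fintype.linearCombination Rᵐᵒᵖ fun i j => op (k j i)
  have hker : LinearMap.ker v ≤ LinearMap.ker (Fintype.linearCombination Rᵐᵒᵖ c) := by
    intro a ha
    have hcol : ∀ j, ∑ i, k j i * (a i).unop = 0 := fun j => op_injective <| by
      simpa [v, Fintype.linearCombination_apply] using congrFun ha j
    refine DFunLike.ext _ _ fun y => ?_
    have hy : (fun i => (a i).unop • y) ∈ trivialSolutions M k :=
      ⟨1, fun i _ => (a i).unop, fun _ => y, fun j _ => hcol j, fun i => by simp⟩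
    simpa [hχ, Fintype.linearCombination_apply] using hχT _ hy
  obtain ⟨W, hW⟩ := (Module.Baer.of_injective hI).exists_comp_eq_of_ker_le v _ hker
  set ψ : κ → CharMod M := fun j => W (Pi.single j 1)
  have hc : ∀ i, c i = ∑ j, op (k j i) • ψ j := fun i => by
    have hWv := LinearMap.congr_fun hW (Pi.single i 1)
    rw [LinearMap.comp_apply, W.eq_fintypeLinearCombination] at hWv
    simpa [v, Fintype.linearCombination_apply] using hWv.symm
  apply hχx
  calc χ x = ∑ i, ∑ j, ψ j (k j i • x i) := by simp [hχ, hc]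
    _ = ∑ j, ψ j (∑ i, k j i • x i) := by rw [Finset.sum_comm]; simp [map_sum]
    _ = 0 := by simp [hx]

end EquationalCriterion

section Lambek

variable {R : Type u} [Ring R] {M : Type u} [AddCommGroup M] [Module R M]

theorem IsFlat.sum_apply_eq_zero_of_sum_smul_eq_zero (hM : IsFlat R M)
    {I : Submodule Rᵐᵒᵖ Rᵐᵒᵖ} (g : I →ₗ[Rᵐᵒᵖ] CharMod M) {ι : Type u} [Fintype ι] (r : ι → I)
    (x : ι → M) (hrx : ∑ a, (r a : Rᵐᵒᵖ).unop • x a = 0) : ∑ a, g (r a) (x a) = 0 := by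
  obtain ⟨n, A, y, hA, hxy⟩ :=
    hM.mem_trivialSolutions (fun (_ : Unit) a => (r a : Rᵐᵒᵖ).unop) x fun _ => hrx
  have hrA : ∀ j, ∑ a, op (A a j) • r a = 0 := fun j => Subtype.ext <| by
    simpa using congrArg op (hA () j)
  calc ∑ a, g (r a) (x a) = ∑ j, g (∑ a, op (A a j) • r a) (y j) := by
        simp only [hxy, map_sum, map_smul, CharMod.sum_apply, CharMod.op_smul_apply, unop_op]
        exact Finset.sum_comm
    _ = 0 := by simp [hrA]

theorem IsFlat.baer_charMod (hM : IsFlat R M) : Module.Baer Rᵐᵒᵖ (CharMod M) := by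
  intro I g
  set u : (I × M →₀ ℤ) →ₗ[ℤ] M := Finsupp.linearCombination ℤ fun p => (p.1 : Rᵐᵒᵖ).unop • p.2
  set χ : (I × M →₀ ℤ) →ₗ[ℤ] AddCircle (1 : ℚ) := Finsupp.linearCombination ℤ fun p => g p.1 p.2
  have hker : LinearMap.ker u ≤ LinearMap.ker χ := by
    intro s hs
    rw [LinearMap.mem_ker, Finsupp.linearCombination_apply, Finsupp.sum,
      ← Finset.sum_coe_sort] at hs ⊢
    have := hM.sum_apply_eq_zero_of_sum_smul_eq_zero g (fun p : s.support => p.1.1)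
      (fun p => s p • p.1.2)
      (by rw [← hs]; exact Finset.sum_congr rfl fun p _ => smul_comm _ _ _)
    simpa [map_zsmul] using this
  obtain ⟨c, hc⟩ :=
    (Module.Baer.of_divisible (AddCircle (1 : ℚ))).exists_comp_eq_of_ker_le u χ hker
  refine ⟨LinearMap.toSpanSingleton Rᵐᵒᵖ (CharMod M) c.toAddMonoidHom,
    fun r hr => DFunLike.ext _ _ fun m => ?_⟩
  have hcm := LinearMap.congr_fun hc (Finsupp.single (⟨r, hr⟩, m) 1)
  simp only [u, χ, LinearMap.comp_apply, Finsupp.linearCombination_single, one_smul] at hcm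
  exact hcm

end Lambek

/-- **Lambek's theorem.** A left `R`-module `M` is flat if and only if its character module
`M⁺ = Hom_ℤ(M, ℚ/ℤ)` is an injective right `R`-module. -/
theorem stmt4 {R : Type u} [Ring R] (M : Type u) [AddCommGroup M] [Module R M] :
    IsFlat R M ↔ Module.Injective Rᵐᵒᵖ (CharMod M) :=
  ⟨fun hM => hM.baer_charMod.injective, fun hI =>
    isFlat_of_forall_mem_trivialSolutions fun _ _ k x hx =>
      mem_trivialSolutions_of_injective hI k x hx⟩
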